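/- arXiv:0705.3372 — 4 statements merged into one kernel-verified Lean document; each statement's English description precedes it below -/
import Mathlib

section
/- Let k be a number field and p a prime number. For every a ∈ k^× whose class lies in V_∅(k), the principal fractional ideal (a) is the p-th power of a (necessarily unique) fractional ideal I of k, and sending the class of a to the ideal class of I defines a group homomorphism V_∅(k) → Cl(k) whose image is exactly the p-torsion subgroup Cl(k)[p] and whose kernel is exactly the image of the unit group O_k^× in k^×/(k^×)^p. In other words, there is an exact sequence 0 → O_k^×/(O_k^×)^p → V_∅(k) → Cl(k)[p] → 0. -/
open NumberField IsDedekindDomain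

/-- The subgroup of `p`-th powers in a commutative group `G`. -/
def pPowers (G : Type*) [CommGroup G] (p : ℕ) : Subgroup G :=
  (powMonoidHom p : G →* G).range

/-- The map `k^× → (k_v)^×` into the units of the `v`-adic completion. -/
noncomputable def localUnitsMap (k : Type*) [Field k] [NumberField k]
    (v : HeightOneSpectrum (𝓞 k)) : kˣ →* (v.adicCompletion k)ˣ :=
  Units.map (algebraMap k (v.adicCompletion k)).toMonoidHom

/-- The `v`-adic valuation of a nonzero element of `k`, as an element of
`Multiplicative ℤ` (a uniformizer is sent to `ofAdd (-1)`). -/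
noncomputable def mulValHom (k : Type*) [Field k] [NumberField k]
    (v : HeightOneSpectrum (𝓞 k)) : kˣ →* Multiplicative ℤ :=
  (WithZero.unitsWithZeroEquiv.toMonoidHom).comp
    (Units.map ((v.valuation (K := k)).toMonoidWithZeroHom.toMonoidHom))

/-- The normalized additive `v`-adic valuation `v(a) ∈ ℤ` of `a ∈ k^×`
(a uniformizer has valuation `1`). -/
noncomputable def addVal (k : Type*) [Field k] [NumberField k]
    (v : HeightOneSpectrum (𝓞 k)) (a : kˣ) : ℤ :=
  - Multiplicative.toAdd (mulValHom k v a)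

/-- The additive `v`-adic valuation modulo `p`, as a group homomorphism. -/
noncomputable def valModP (k : Type*) [Field k] [NumberField k] (p : ℕ)
    (v : HeightOneSpectrum (𝓞 k)) : kˣ →* Multiplicative (ZMod p) :=
  (AddMonoidHom.toMultiplicative (Int.castAddHom (ZMod p))).comp (mulValHom k v)

/-- The subgroup of those `a ∈ k^×` which are `p`-th powers in the completion `k_v`. -/
noncomputable def locallyPthPower (k : Type*) [Field k] [NumberField k] (p : ℕ)
    (v : HeightOneSpectrum (𝓞 k)) : Subgroup kˣ :=
  Subgroup.comap (localUnitsMap k v) (pPowers (v.adicCompletion k)ˣ p)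

/-- The subgroup of those `a ∈ k^×` which are `p`-th powers in `k_v` for all `v ∈ S` and
whose `v`-adic valuation is divisible by `p` for every nonzero prime `v ∉ S`. -/
noncomputable def VSpre (k : Type*) [Field k] [NumberField k] (p : ℕ)
    (S : Set (HeightOneSpectrum (𝓞 k))) : Subgroup kˣ :=
  (⨅ v ∈ S, locallyPthPower k p v) ⊓ (⨅ v ∈ Sᶜ, (valModP k p v).ker)

/-- The Kummer group `V_S(k)`, the subgroup of `k^×/(k^×)^p` consisting of the classes of
those `a ∈ k^×` which are `p`-th powers in `k_v` for every `v ∈ S` and whose `v`-adic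
valuation is divisible by `p` for every nonzero prime `v ∉ S`. -/
noncomputable def VS (k : Type*) [Field k] [NumberField k] (p : ℕ)
    (S : Set (HeightOneSpectrum (𝓞 k))) : Subgroup (kˣ ⧸ pPowers kˣ p) :=
  (VSpre k p S).map (QuotientGroup.mk' (pPowers kˣ p))

/-! Nonzero fractional ideals of a Dedekind domain form the free abelian group on the primes,
so `p`-th roots of ideals are unique, and `(a)` has one exactly when `p` divides every valuation
of `a`. Hence `a ↦ I` with `I ^ p = (a)` is a homomorphism on `V_∅(k)`. Its class is `p`-torsion,
every `p`-torsion class `[J]` arises (write `J ^ p = (b)`), and `[I] = 1` iff `I = (t)`, i.e.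
`a = u t ^ p` for a unit `u`. -/

open scoped nonZeroDivisors

namespace FractionalIdeal

variable {R K : Type*} [CommRing R] [IsDedekindDomain R] [Field K] [Algebra R K]
  [IsFractionRing R K]

theorem count_spanSingleton (v : HeightOneSpectrum R) (x : Kˣ) :
    count K v (spanSingleton R⁰ (x : K)) = -Multiplicative.toAdd (v.valuationOfNeZero x) := by
  classical
  set s := IsLocalization.sec R⁰ (x : K)
  have hs : (algebraMap R K s.2 : K) ≠ 0 :=
    IsFractionRing.to_map_ne_zero_of_mem_nonZeroDivisors s.2.2
  have hx : spanSingleton R⁰ (x : K)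
      = spanSingleton R⁰ (algebraMap R K s.2)⁻¹ * (Ideal.span {s.1} : Ideal R) := by
    rw [coeIdeal_span_singleton, spanSingleton_mul_spanSingleton,
      ← IsLocalization.sec_spec R⁰ (x : K), inv_mul_eq_div, mul_div_assoc, div_self hs, mul_one]
  rw [count_well_defined K v (spanSingleton_ne_zero_iff.mpr x.ne_zero) hx]
  show _ = -Multiplicative.toAdd (v.valuationOfNeZeroToFun x)
  simp only [HeightOneSpectrum.valuationOfNeZeroToFun, toAdd_ofAdd]
  ring

theorem eq_of_count_eq {I J : FractionalIdeal R⁰ K} (hI : I ≠ 0) (hJ : J ≠ 0)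
    (h : ∀ v, count K v I = count K v J) : I = J := by
  rw [← finprod_heightOneSpectrum_factorization' K hI,
    ← finprod_heightOneSpectrum_factorization' K hJ]
  simp_rw [h]

theorem pow_left_injective {n : ℕ} (hn : n ≠ 0) :
    Function.Injective fun I : FractionalIdeal R⁰ K ↦ I ^ n := by
  intro I J (h : I ^ n = J ^ n)
  rcases eq_or_ne J 0 with rfl | hJ
  · simpa [zero_pow hn, pow_eq_zero_iff hn] using h
  have hI : I ≠ 0 := by
    rintro rfl
    exact hJ ((pow_eq_zero_iff hn).mp (by rw [← h, zero_pow hn]))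
  refine eq_of_count_eq hI hJ fun v ↦ ?_
  have hv := congrArg (count K v) h
  rw [count_pow, count_pow] at hv
  exact mul_left_cancel₀ (Nat.cast_ne_zero.mpr hn) hv

theorem exists_pow_eq_of_dvd_count {n : ℕ} (hn : n ≠ 0) {I : FractionalIdeal R⁰ K}
    (hI : I ≠ 0) (h : ∀ v, (n : ℤ) ∣ count K v I) : ∃ J, J ^ n = I := by
  choose e he using h
  have hsupp : (Function.mulSupport fun v ↦ (v.asIdeal : FractionalIdeal R⁰ K) ^ e v).Finite := by
    refine (finite_factors I).subset fun v hv (hcount : count K v I = 0) ↦ hv ?_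
    rw [he v, mul_eq_zero, Nat.cast_eq_zero] at hcount
    simp [hcount.resolve_left hn]
  refine ⟨∏ᶠ v, (v.asIdeal : FractionalIdeal R⁰ K) ^ e v, ?_⟩
  conv_rhs => rw [← finprod_heightOneSpectrum_factorization' K hI]
  rw [finprod_pow hsupp]
  refine finprod_congr fun v ↦ ?_
  rw [← zpow_natCast, ← zpow_mul, mul_comm, ← he v]

theorem pow_injective_units {n : ℕ} (hn : n ≠ 0) :
    Function.Injective (powMonoidHom n : (FractionalIdeal R⁰ K)ˣ →* _) :=
  fun _ _ h ↦ Units.ext <| pow_left_injective hn (congrArg Units.val h)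

theorem mem_pPowers_units_iff {n : ℕ} (hn : n ≠ 0) {I : (FractionalIdeal R⁰ K)ˣ} :
    I ∈ pPowers _ n ↔ ∀ v, (n : ℤ) ∣ count K v (I : FractionalIdeal R⁰ K) := by
  constructor
  · rintro ⟨J, rfl⟩ v
    rw [powMonoidHom_apply, Units.val_pow_eq_pow_val, count_pow]
    exact dvd_mul_right _ _
  · intro h
    obtain ⟨J, hJ⟩ := exists_pow_eq_of_dvd_count hn I.ne_zero h
    have hJ0 : J ≠ 0 := by rintro rfl; exact I.ne_zero (by rw [← hJ, zero_pow hn])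
    exact ⟨Units.mk0 J hJ0, Units.ext hJ⟩

end FractionalIdeal

theorem ClassGroup.mk_eq_one_iff_mem_range {R K : Type*} [CommRing R] [IsDomain R] [Field K]
    [Algebra R K] [IsFractionRing R K] {I : (FractionalIdeal R⁰ K)ˣ} :
    ClassGroup.mk K I = 1 ↔ I ∈ (toPrincipalIdeal R K).range := by
  rw [ClassGroup.mk_eq_one_iff, mem_principal_ideals_iff, FractionalIdeal.isPrincipal_iff]
  exact exists_congr fun _ ↦ eq_comm

theorem toPrincipalIdeal_eq_toPrincipalIdeal_iff {R K : Type*} [CommRing R] [IsDomain R]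
    [Field K] [Algebra R K] [IsFractionRing R K] {x y : Kˣ} :
    toPrincipalIdeal R K x = toPrincipalIdeal R K y ↔
      ∃ u : Rˣ, Units.map (algebraMap R K).toMonoidHom u * x = y := by
  rw [toPrincipalIdeal_eq_iff, coe_toPrincipalIdeal, FractionalIdeal.spanSingleton_eq_spanSingleton]
  refine exists_congr fun u ↦ ?_
  rw [Units.ext_iff, Units.smul_def, Algebra.smul_def]
  rfl

section KummerClassMap

variable {k : Type*} [Field k] [NumberField k] {p : ℕ}

theorem mulValHom_eq_valuationOfNeZero (v : HeightOneSpectrum (𝓞 k)) (a : kˣ) :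
    mulValHom k v a = v.valuationOfNeZero a := by
  rw [← WithZero.coe_inj, HeightOneSpectrum.valuationOfNeZero_eq]
  exact WithZero.coe_unzero _

theorem valModP_eq_one_iff (v : HeightOneSpectrum (𝓞 k)) (a : kˣ) :
    valModP k p v a = 1 ↔
      (p : ℤ) ∣ FractionalIdeal.count k v (FractionalIdeal.spanSingleton (𝓞 k)⁰ (a : k)) := by
  rw [FractionalIdeal.count_spanSingleton, dvd_neg, ← mulValHom_eq_valuationOfNeZero,
    ← ZMod.intCast_zmod_eq_zero_iff_dvd, valModP, MonoidHom.comp_apply]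
  exact ofAdd_eq_one

theorem VSpre_empty_eq_comap (hp : p ≠ 0) :
    VSpre k p ∅ = (pPowers _ p).comap (toPrincipalIdeal (𝓞 k) k) := by
  ext a
  simp only [VSpre, Set.mem_empty_iff_false, iInf_pos, Set.compl_empty, Set.mem_univ,
    iInf_false, iInf_top, top_inf_eq, Subgroup.mem_iInf, MonoidHom.mem_ker, valModP_eq_one_iff,
    Subgroup.mem_comap, FractionalIdeal.mem_pPowers_units_iff hp, coe_toPrincipalIdeal]

theorem pPowers_le_VSpre_empty (hp : p ≠ 0) : pPowers kˣ p ≤ VSpre k p ∅ := by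
  rintro _ ⟨t, rfl⟩
  rw [VSpre_empty_eq_comap hp, Subgroup.mem_comap, powMonoidHom_apply, map_pow]
  exact ⟨_, rfl⟩

theorem mem_VSpre_empty_of_mk_mem_VS (hp : p ≠ 0) {a : kˣ}
    (ha : (QuotientGroup.mk a : kˣ ⧸ pPowers kˣ p) ∈ VS k p ∅) : a ∈ VSpre k p ∅ := by
  have : a ∈ (VS k p ∅).comap (QuotientGroup.mk' _) := ha
  rwa [VS, Subgroup.comap_map_eq, QuotientGroup.ker_mk',
    sup_eq_left.mpr (pPowers_le_VSpre_empty hp)] at this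

variable (k) in
noncomputable def idealRoot (hp : p ≠ 0) : VSpre k p ∅ →* (FractionalIdeal (𝓞 k)⁰ k)ˣ :=
  (MonoidHom.ofInjective (FractionalIdeal.pow_injective_units hp)).symm.toMonoidHom.comp
    (((toPrincipalIdeal (𝓞 k) k).subgroupComap (pPowers _ p)).comp
      (Subgroup.inclusion (VSpre_empty_eq_comap hp).le))

theorem idealRoot_pow (hp : p ≠ 0) (a : VSpre k p ∅) :
    idealRoot k hp a ^ p = toPrincipalIdeal (𝓞 k) k a := by
  rw [← powMonoidHom_apply, ← MonoidHom.ofInjective_apply (FractionalIdeal.pow_injective_units hp)]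
  exact congrArg Subtype.val (MulEquiv.apply_symm_apply _ _)

theorem idealRoot_eq_of_pow_eq (hp : p ≠ 0) {a : VSpre k p ∅} {I : (FractionalIdeal (𝓞 k)⁰ k)ˣ}
    (hI : I ^ p = toPrincipalIdeal (𝓞 k) k a) : idealRoot k hp a = I :=
  FractionalIdeal.pow_injective_units hp ((idealRoot_pow hp a).trans hI.symm)

theorem existsUnique_pow_eq_spanSingleton (hp : p ≠ 0) {a : kˣ} (ha : a ∈ VSpre k p ∅) :
    ∃! I : FractionalIdeal (𝓞 k)⁰ k, I ^ p = FractionalIdeal.spanSingleton _ (a : k) := by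
  have hroot : (idealRoot k hp ⟨a, ha⟩ : FractionalIdeal (𝓞 k)⁰ k) ^ p
      = FractionalIdeal.spanSingleton _ (a : k) := by
    rw [← Units.val_pow_eq_pow_val, idealRoot_pow, coe_toPrincipalIdeal]
  exact ⟨_, hroot, fun J hJ ↦ FractionalIdeal.pow_left_injective hp (hJ.trans hroot.symm)⟩

theorem classGroup_mk_idealRoot_eq_one_iff (hp : p ≠ 0) (a : VSpre k p ∅) :
    ClassGroup.mk k (idealRoot k hp a) = 1 ↔
      ∃ u : (𝓞 k)ˣ, (QuotientGroup.mk (Units.map (algebraMap (𝓞 k) k).toMonoidHom u)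
        : kˣ ⧸ pPowers kˣ p) = QuotientGroup.mk (a : kˣ) := by
  simp only [ClassGroup.mk_eq_one_iff_mem_range, QuotientGroup.eq]
  constructor
  · rintro ⟨t, ht⟩
    have : toPrincipalIdeal (𝓞 k) k (t ^ p) = toPrincipalIdeal (𝓞 k) k a := by
      rw [map_pow, ht, idealRoot_pow]
    obtain ⟨u, hu⟩ := toPrincipalIdeal_eq_toPrincipalIdeal_iff.mp this
    exact ⟨u, t, by rw [powMonoidHom_apply, ← hu, inv_mul_cancel_left]⟩
  · rintro ⟨u, t, ht⟩
    refine ⟨t, (idealRoot_eq_of_pow_eq hp ?_).symm⟩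
    rw [← map_pow, toPrincipalIdeal_eq_toPrincipalIdeal_iff]
    exact ⟨u, by rw [← powMonoidHom_apply, ht, mul_inv_cancel_left]⟩

variable (k p) in
noncomputable def VSpre.toVS (S : Set (HeightOneSpectrum (𝓞 k))) : VSpre k p S →* VS k p S :=
  (QuotientGroup.mk' (pPowers kˣ p)).subgroupMap (VSpre k p S)

theorem VSpre.toVS_surjective (S : Set (HeightOneSpectrum (𝓞 k))) :
    Function.Surjective (VSpre.toVS k p S) :=
  MonoidHom.subgroupMap_surjective _ _

theorem ker_toVS_le_ker (hp : p ≠ 0) :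
    (VSpre.toVS k p ∅).ker ≤ ((ClassGroup.mk k).comp (idealRoot k hp)).ker := fun a ha ↦
  (classGroup_mk_idealRoot_eq_one_iff hp a).mpr
    ⟨1, by rw [map_one, QuotientGroup.mk_one]; exact (congrArg Subtype.val ha).symm⟩

variable (k) in
noncomputable def kummerClassMap (hp : p ≠ 0) : VS k p ∅ →* ClassGroup (𝓞 k) :=
  (VSpre.toVS k p ∅).liftOfSurjective (VSpre.toVS_surjective ∅)
    ⟨(ClassGroup.mk k).comp (idealRoot k hp), ker_toVS_le_ker hp⟩

theorem kummerClassMap_toVS (hp : p ≠ 0) (a : VSpre k p ∅) :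
    kummerClassMap k hp (VSpre.toVS k p ∅ a) = ClassGroup.mk k (idealRoot k hp a) :=
  MonoidHom.liftOfRightInverse_comp_apply _ _ _ _ a

theorem range_kummerClassMap (hp : p ≠ 0) :
    Set.range (kummerClassMap k hp) = {c | c ^ p = 1} := by
  rw [← (VSpre.toVS_surjective ∅).range_comp]
  ext c
  constructor
  · rintro ⟨a, rfl⟩
    show _ ^ p = 1
    rw [Function.comp_apply, kummerClassMap_toVS, ← map_pow, idealRoot_pow,
      ClassGroup.mk_eq_one_iff_mem_range]
    exact ⟨a, rfl⟩
  · refine ClassGroup.induction (K := k) (fun J (hJ : ClassGroup.mk k J ^ p = 1) ↦ ?_) c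
    rw [← map_pow, ClassGroup.mk_eq_one_iff_mem_range] at hJ
    obtain ⟨b, hb⟩ := hJ
    have hbV : b ∈ VSpre k p ∅ := by
      rw [VSpre_empty_eq_comap hp]
      exact ⟨J, hb.symm⟩
    exact ⟨⟨b, hbV⟩, by rw [Function.comp_apply, kummerClassMap_toVS,
      idealRoot_eq_of_pow_eq hp hb.symm]⟩

end KummerClassMap

/-- the exact sequence `0 → O_k^×/(O_k^×)^p → V_∅(k) → Cl(k)[p] → 0`. -/
theorem statement0 (k : Type) [Field k] [NumberField k] (p : ℕ) (hp : p.Prime) :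
    (∀ a : kˣ, (QuotientGroup.mk a : kˣ ⧸ pPowers kˣ p) ∈ VS k p ∅ →
      ∃! I : FractionalIdeal (nonZeroDivisors (𝓞 k)) k,
        I ^ p = FractionalIdeal.spanSingleton (nonZeroDivisors (𝓞 k)) (a : k)) ∧
    ∃ φ : VS k p ∅ →* ClassGroup (𝓞 k),
      (∀ (a : kˣ) (h : (QuotientGroup.mk a : kˣ ⧸ pPowers kˣ p) ∈ VS k p ∅)
          (I : (FractionalIdeal (nonZeroDivisors (𝓞 k)) k)ˣ),
        (I : FractionalIdeal (nonZeroDivisors (𝓞 k)) k) ^ p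
            = FractionalIdeal.spanSingleton (nonZeroDivisors (𝓞 k)) (a : k) →
        φ ⟨QuotientGroup.mk a, h⟩ = ClassGroup.mk k I) ∧
      Set.range φ = {c : ClassGroup (𝓞 k) | c ^ p = 1} ∧
      ∀ x : VS k p ∅, φ x = 1 ↔
        ∃ u : (𝓞 k)ˣ,
          (QuotientGroup.mk (Units.map (algebraMap (𝓞 k) k).toMonoidHom u)
            : kˣ ⧸ pPowers kˣ p) = (x : kˣ ⧸ pPowers kˣ p) := by
  have hp0 := hp.ne_zero
  refine ⟨fun a ha ↦ existsUnique_pow_eq_spanSingleton hp0 (mem_VSpre_empty_of_mk_mem_VS hp0 ha),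
    kummerClassMap k hp0, fun a ha I hI ↦ ?_, range_kummerClassMap hp0, fun x ↦ ?_⟩
  · have ha' := mem_VSpre_empty_of_mk_mem_VS hp0 ha
    have hroot : idealRoot k hp0 ⟨a, ha'⟩ = I :=
      idealRoot_eq_of_pow_eq hp0 (Units.ext (hI.trans (coe_toPrincipalIdeal _).symm))
    rw [← hroot, ← kummerClassMap_toVS]
    rfl
  · obtain ⟨a, rfl⟩ := VSpre.toVS_surjective ∅ x
    rw [kummerClassMap_toVS, classGroup_mk_idealRoot_eq_one_iff]
    rfl
end

section
/- Let k be a number field, p a prime number, S a finite set of nonzero primes of O_k, and 𝔭 a nonzero prime of O_k with 𝔭 ∉ S. Then V_{S∪{𝔭}}(k) is contained in V_S(k), and the map sending the class of a ∈ k^× representing an element of V_S(k) to the class of u in O_𝔭^×/(O_𝔭^×)^p, where a = u·b^p is any factorization in k_𝔭^× with u ∈ O_𝔭^× and b ∈ k_𝔭^× (such a factorization exists because p divides the 𝔭-adic valuation of a), is a well-defined group homomorphism V_S(k) → O_𝔭^×/(O_𝔭^×)^p whose kernel is exactly V_{S∪{𝔭}}(k). In particular V_S(k)/V_{S∪{𝔭}}(k)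 embeds into O_𝔭^×/(O_𝔭^×)^p. -/
open NumberField IsDedekindDomain

/-!
Fix a uniformizer `ϖ` of `k_𝔭`. Then `x ↦ x ϖ^(-ord x)` is a homomorphism `k_𝔭^× → O_𝔭^×`;
followed by the projection to `O_𝔭^×/(O_𝔭^×)^p` it kills `p`-th powers, so it induces a
homomorphism on `k^×/(k^×)^p`. It sends `u b^p` to the class of `u`, which gives the stated
formula independently of `ϖ`. If `p ∣ ord a` then `a = (a ϖ^(-ord a)) (ϖ^(ord a / p))^p`, so the
class of `a` is trivial exactly when `a` is a `p`-th power in `k_𝔭`; and `V_{S ∪ {𝔭}}(k)` is cut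
out of `V_S(k)` by precisely this condition.
-/

open scoped WithZero

section pPowers

variable {G : Type*} [CommGroup G] (p : ℕ)

lemma pow_mem_pPowers (g : G) : g ^ p ∈ pPowers G p :=
  ⟨g, rfl⟩

lemma pow_eq_one_of_quotient_pPowers (q : G ⧸ pPowers G p) : q ^ p = 1 :=
  QuotientGroup.induction_on q fun g ↦ (QuotientGroup.eq_one_iff _).mpr (pow_mem_pPowers p g)

end pPowers

namespace Valuation

variable {K : Type*} [Field K] (v : Valuation K ℤᵐ⁰)

/-- `Multiplicative.toAdd (v.unitsVal x)` is *minus* the order of `x`. -/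
noncomputable def unitsVal : Kˣ →* Multiplicative ℤ :=
  WithZero.unitsWithZeroEquiv.toMonoidHom.comp (Units.map v.toMonoidWithZeroHom.toMonoidHom)

lemma coe_unitsVal (x : Kˣ) : (v.unitsVal x : ℤᵐ⁰) = v x :=
  WithZero.coe_unitsWithZeroEquiv_eq_units_val _

lemma exp_toAdd_unitsVal (x : Kˣ) : WithZero.exp (Multiplicative.toAdd (v.unitsVal x)) = v x :=
  v.coe_unitsVal x

lemma unitsVal_eq_one_iff {x : Kˣ} : v.unitsVal x = 1 ↔ v x = 1 := by
  rw [← coe_unitsVal]; norm_cast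

variable {v} {ϖ : Kˣ} (hϖ : v ϖ = WithZero.exp (-1))

noncomputable def unitPart : Kˣ →* v.valuationSubringˣ :=
  v.valuationSubring.unitGroupMulEquiv.toMonoidHom.comp <|
    (MonoidHom.id Kˣ * (zpowersHom Kˣ ϖ).comp v.unitsVal).codRestrict _ fun x ↦ by
      rw [mem_unitGroup_iff]
      simp only [MonoidHom.mul_apply, MonoidHom.id_apply, MonoidHom.comp_apply,
        zpowersHom_apply, Units.val_mul, Units.val_zpow_eq_zpow_val, map_mul, map_zpow₀, hϖ]
      rw [← exp_toAdd_unitsVal, ← WithZero.exp_zsmul, ← WithZero.exp_add]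
      simp

lemma coe_unitPart (x : Kˣ) :
    ((unitPart hϖ x : v.valuationSubring) : K) =
      ↑(x * ϖ ^ Multiplicative.toAdd (v.unitsVal x)) :=
  rfl

lemma unitPart_eq_of_coe_eq {x : Kˣ} {u : v.valuationSubringˣ} (h : (x : K) = (u : K)) :
    unitPart hϖ x = u := by
  have hx : v.unitsVal x = 1 := by
    rw [unitsVal_eq_one_iff, h]
    exact (mem_unitGroup_iff _ v _).mp (v.valuationSubring.unitGroupMulEquiv.symm u).prop
  ext
  simp [coe_unitPart, hx, h]

lemma coe_eq_unitPart_mul_pow {p : ℕ} {x : Kˣ}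
    (hp : (p : ℤ) ∣ Multiplicative.toAdd (v.unitsVal x)) :
    (x : K) = (unitPart hϖ x : K) * ↑(ϖ ^ (-(Multiplicative.toAdd (v.unitsVal x) / p))) ^ p := by
  rw [coe_unitPart, ← Units.val_pow_eq_pow_val, ← Units.val_mul, ← zpow_natCast, ← zpow_mul,
    mul_assoc, ← zpow_add, neg_mul, Int.ediv_mul_cancel hp, add_neg_cancel, zpow_zero, mul_one]

variable (p : ℕ)

noncomputable def kummerClass : Kˣ →* v.valuationSubringˣ ⧸ pPowers v.valuationSubringˣ p :=
  (QuotientGroup.mk' _).comp (unitPart hϖ)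

lemma kummerClass_pow (b : Kˣ) : kummerClass hϖ p (b ^ p) = 1 := by
  rw [map_pow, pow_eq_one_of_quotient_pPowers]

lemma kummerClass_eq_of_coe_eq_mul_pow {x b : Kˣ} {u : v.valuationSubringˣ}
    (h : (x : K) = (u : K) * (b : K) ^ p) : kummerClass hϖ p x = QuotientGroup.mk u := by
  have hu : ((x * (b ^ p)⁻¹ : Kˣ) : K) = (u : K) := by
    simp [h]
  rw [← inv_mul_cancel_right x (b ^ p), map_mul, kummerClass_pow, mul_one]
  exact congrArg QuotientGroup.mk (unitPart_eq_of_coe_eq hϖ hu)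

lemma kummerClass_eq_one_iff {x : Kˣ} (hp : (p : ℤ) ∣ Multiplicative.toAdd (v.unitsVal x)) :
    kummerClass hϖ p x = 1 ↔ x ∈ pPowers Kˣ p := by
  constructor
  · intro h
    obtain ⟨w, hw⟩ := (QuotientGroup.eq_one_iff _).mp h
    refine ⟨Units.map v.valuationSubring.subtype.toMonoidHom w *
      ϖ ^ (-(Multiplicative.toAdd (v.unitsVal x) / p)), Units.ext ?_⟩
    rw [coe_eq_unitPart_mul_pow hϖ hp, ← hw]
    simp [mul_pow]
  · rintro ⟨c, rfl⟩
    exact kummerClass_pow hϖ p c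

end Valuation

section AdicCompletion

variable {k : Type*} [Field k] [NumberField k] (p : ℕ) (𝔭 : HeightOneSpectrum (𝓞 k))

lemma mulValHom_eq_unitsVal : mulValHom k 𝔭 = (𝔭.valuation k).unitsVal :=
  rfl

lemma unitsVal_localUnitsMap (a : kˣ) :
    Valued.v.unitsVal (localUnitsMap k 𝔭 a) = mulValHom k 𝔭 a := by
  apply WithZero.coe_injective
  rw [Valuation.coe_unitsVal, mulValHom_eq_unitsVal, Valuation.coe_unitsVal]
  exact HeightOneSpectrum.valuedAdicCompletion_eq_valuation' 𝔭 (a : k)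

lemma exists_uniformizer_adicCompletion :
    ∃ ϖ : (𝔭.adicCompletion k)ˣ, Valued.v (ϖ : 𝔭.adicCompletion k) = WithZero.exp (-1) := by
  obtain ⟨π, hπ⟩ := 𝔭.valuation_exists_uniformizer k
  have hπ' : Valued.v (π : 𝔭.adicCompletion k) = WithZero.exp (-1) := by
    rw [HeightOneSpectrum.valuedAdicCompletion_eq_valuation', hπ]
  refine ⟨Units.mk0 (π : 𝔭.adicCompletion k) ((Valuation.ne_zero_iff Valued.v).mp ?_), hπ'⟩
  rw [hπ']
  exact WithZero.exp_ne_zero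

end AdicCompletion

noncomputable def kummerMap (k : Type*) [Field k] [NumberField k] (p : ℕ)
    (𝔭 : HeightOneSpectrum (𝓞 k)) :
    kˣ ⧸ pPowers kˣ p →*
      (𝔭.adicCompletionIntegers k)ˣ ⧸ pPowers (𝔭.adicCompletionIntegers k)ˣ p :=
  QuotientGroup.lift _
    ((Valuation.kummerClass (exists_uniformizer_adicCompletion 𝔭).choose_spec p).comp
      (localUnitsMap k 𝔭))
    (by
      rintro _ ⟨c, rfl⟩
      show Valuation.kummerClass _ p (localUnitsMap k 𝔭 (c ^ p)) = 1
      rw [map_pow, Valuation.kummerClass_pow])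

section KummerMap

variable {k : Type*} [Field k] [NumberField k] (p : ℕ) (𝔭 : HeightOneSpectrum (𝓞 k))

lemma mem_ker_valModP_iff {a : kˣ} :
    a ∈ (valModP k p 𝔭).ker ↔ (p : ℤ) ∣ Multiplicative.toAdd (mulValHom k 𝔭 a) := by
  rw [← ZMod.intCast_zmod_eq_zero_iff_dvd]
  exact Multiplicative.toAdd.injective.eq_iff.symm

lemma kummerMap_mk_of_eq_mul_pow {a : kˣ} {u : (𝔭.adicCompletionIntegers k)ˣ}
    {b : (𝔭.adicCompletion k)ˣ}
    (h : algebraMap k (𝔭.adicCompletion k) a =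
      (u : 𝔭.adicCompletion k) * (b : 𝔭.adicCompletion k) ^ p) :
    kummerMap k p 𝔭 a = QuotientGroup.mk u :=
  Valuation.kummerClass_eq_of_coe_eq_mul_pow _ p h

lemma kummerMap_mk_eq_one_iff {a : kˣ} (ha : a ∈ (valModP k p 𝔭).ker) :
    kummerMap k p 𝔭 a = 1 ↔ a ∈ locallyPthPower k p 𝔭 := by
  rw [mem_ker_valModP_iff, ← unitsVal_localUnitsMap] at ha
  exact Valuation.kummerClass_eq_one_iff _ p ha

lemma exists_eq_unit_mul_pow {a : kˣ} (ha : a ∈ (valModP k p 𝔭).ker) :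
    ∃ (u : (𝔭.adicCompletionIntegers k)ˣ) (b : (𝔭.adicCompletion k)ˣ),
      algebraMap k (𝔭.adicCompletion k) a =
        (u : 𝔭.adicCompletion k) * (b : 𝔭.adicCompletion k) ^ p := by
  rw [mem_ker_valModP_iff, ← unitsVal_localUnitsMap] at ha
  exact ⟨_, _,
    Valuation.coe_eq_unitPart_mul_pow (exists_uniformizer_adicCompletion 𝔭).choose_spec ha⟩

lemma locallyPthPower_le_ker_valModP : locallyPthPower k p 𝔭 ≤ (valModP k p 𝔭).ker := by
  rintro a ⟨d, hd⟩
  rw [mem_ker_valModP_iff, ← unitsVal_localUnitsMap, ← hd, powMonoidHom_apply, map_pow, toAdd_pow,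
    nsmul_eq_mul]
  exact dvd_mul_right _ _

end KummerMap

section KummerGroup

variable {k : Type*} [Field k] [NumberField k] (p : ℕ)

lemma pPowers_le_locallyPthPower (v : HeightOneSpectrum (𝓞 k)) :
    pPowers kˣ p ≤ locallyPthPower k p v := by
  rintro _ ⟨c, rfl⟩
  exact ⟨localUnitsMap k v c, (map_pow _ _ _).symm⟩

lemma pPowers_le_VSpre (T : Set (HeightOneSpectrum (𝓞 k))) : pPowers kˣ p ≤ VSpre k p T :=
  le_inf (le_iInf₂ fun v _ ↦ pPowers_le_locallyPthPower p v)
    (le_iInf₂ fun v _ ↦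
      (pPowers_le_locallyPthPower p v).trans (locallyPthPower_le_ker_valModP p v))

lemma mk_mem_VS_iff {T : Set (HeightOneSpectrum (𝓞 k))} {a : kˣ} :
    (a : kˣ ⧸ pPowers kˣ p) ∈ VS k p T ↔ a ∈ VSpre k p T := by
  change a ∈ (VS k p T).comap (QuotientGroup.mk' _) ↔ _
  rw [VS, Subgroup.comap_map_eq, QuotientGroup.ker_mk', sup_of_le_left (pPowers_le_VSpre p T)]

lemma VSpre_le_ker_valModP {T : Set (HeightOneSpectrum (𝓞 k))} {𝔭 : HeightOneSpectrum (𝓞 k)}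
    (h𝔭 : 𝔭 ∉ T) : VSpre k p T ≤ (valModP k p 𝔭).ker :=
  inf_le_right.trans (iInf₂_le 𝔭 h𝔭)

lemma VSpre_insert (𝔭 : HeightOneSpectrum (𝓞 k)) (T : Set (HeightOneSpectrum (𝓞 k))) :
    VSpre k p (insert 𝔭 T) = VSpre k p T ⊓ locallyPthPower k p 𝔭 := by
  ext a
  simp only [VSpre, Subgroup.mem_inf, Subgroup.mem_iInf, Set.mem_insert_iff, Set.mem_compl_iff,
    not_or, forall_eq_or_imp]
  constructor
  · rintro ⟨⟨h𝔭, hT⟩, hc⟩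
    refine ⟨⟨hT, fun v hv ↦ ?_⟩, h𝔭⟩
    by_cases hv𝔭 : v = 𝔭
    · exact hv𝔭 ▸ locallyPthPower_le_ker_valModP p 𝔭 h𝔭
    · exact hc v ⟨hv𝔭, hv⟩
  · rintro ⟨⟨hT, hc⟩, h𝔭⟩
    exact ⟨⟨h𝔭, hT⟩, fun v hv ↦ hc v hv.2⟩

end KummerGroup

theorem statement3_general (k : Type) [Field k] [NumberField k] (p : ℕ)
    (S : Finset (HeightOneSpectrum (𝓞 k))) (𝔭 : HeightOneSpectrum (𝓞 k)) (h𝔭 : 𝔭 ∉ S) :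
    VS k p (insert 𝔭 ↑S) ≤ VS k p ↑S ∧
    (∀ a : kˣ, (QuotientGroup.mk a : kˣ ⧸ pPowers kˣ p) ∈ VS k p ↑S →
      ∃ (u : (𝔭.adicCompletionIntegers k)ˣ) (b : (𝔭.adicCompletion k)ˣ),
        algebraMap k (𝔭.adicCompletion k) (a : k)
          = ((u : 𝔭.adicCompletionIntegers k) : 𝔭.adicCompletion k)
            * (b : 𝔭.adicCompletion k) ^ p) ∧
    ∃ φ : VS k p ↑S →*
        ((𝔭.adicCompletionIntegers k)ˣ ⧸ pPowers (𝔭.adicCompletionIntegers k)ˣ p),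
      (∀ (a : kˣ) (h : (QuotientGroup.mk a : kˣ ⧸ pPowers kˣ p) ∈ VS k p ↑S)
          (u : (𝔭.adicCompletionIntegers k)ˣ) (b : (𝔭.adicCompletion k)ˣ),
        algebraMap k (𝔭.adicCompletion k) (a : k)
          = ((u : 𝔭.adicCompletionIntegers k) : 𝔭.adicCompletion k)
            * (b : 𝔭.adicCompletion k) ^ p →
        φ ⟨QuotientGroup.mk a, h⟩ = QuotientGroup.mk u) ∧
      ∀ x : VS k p ↑S, φ x = 1 ↔ (x : kˣ ⧸ pPowers kˣ p) ∈ VS k p (insert 𝔭 ↑S) := by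
  have hS : ∀ {a : kˣ}, (a : kˣ ⧸ pPowers kˣ p) ∈ VS k p ↑S → a ∈ (valModP k p 𝔭).ker :=
    fun ha ↦ VSpre_le_ker_valModP p (Finset.mem_coe.not.mpr h𝔭) ((mk_mem_VS_iff p).mp ha)
  refine ⟨Subgroup.map_mono (VSpre_insert p 𝔭 _ ▸ inf_le_left),
    fun a ha ↦ exists_eq_unit_mul_pow p 𝔭 (hS ha),
    (kummerMap k p 𝔭).comp (VS k p S).subtype,
    fun a _ u b h ↦ kummerMap_mk_of_eq_mul_pow p 𝔭 h, ?_⟩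
  rintro ⟨x, hx⟩
  induction x using QuotientGroup.induction_on with | H a
  rw [mk_mem_VS_iff, VSpre_insert, Subgroup.mem_inf, ← mk_mem_VS_iff, and_iff_right hx]
  exact kummerMap_mk_eq_one_iff p 𝔭 (hS hx)

/-- `V_{S∪{𝔭}}(k) ⊆ V_S(k)`; for `a` representing a class in `V_S(k)` there is a
factorization `a = u·b^p` in `k_𝔭` with `u ∈ O_𝔭^×`; sending the class of `a` to the class of
`u` is a well-defined homomorphism `V_S(k) → O_𝔭^×/(O_𝔭^×)^p` with kernel exactly
`V_{S∪{𝔭}}(k)`. -/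
theorem statement3 (k : Type) [Field k] [NumberField k] (p : ℕ) (hp : p.Prime)
    (S : Finset (HeightOneSpectrum (𝓞 k))) (𝔭 : HeightOneSpectrum (𝓞 k)) (h𝔭 : 𝔭 ∉ S) :
    VS k p (insert 𝔭 ↑S) ≤ VS k p ↑S ∧
    (∀ a : kˣ, (QuotientGroup.mk a : kˣ ⧸ pPowers kˣ p) ∈ VS k p ↑S →
      ∃ (u : (𝔭.adicCompletionIntegers k)ˣ) (b : (𝔭.adicCompletion k)ˣ),
        algebraMap k (𝔭.adicCompletion k) (a : k)
          = ((u : 𝔭.adicCompletionIntegers k) : 𝔭.adicCompletion k)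
            * (b : 𝔭.adicCompletion k) ^ p) ∧
    ∃ φ : VS k p ↑S →*
        ((𝔭.adicCompletionIntegers k)ˣ ⧸ pPowers (𝔭.adicCompletionIntegers k)ˣ p),
      (∀ (a : kˣ) (h : (QuotientGroup.mk a : kˣ ⧸ pPowers kˣ p) ∈ VS k p ↑S)
          (u : (𝔭.adicCompletionIntegers k)ˣ) (b : (𝔭.adicCompletion k)ˣ),
        algebraMap k (𝔭.adicCompletion k) (a : k)
          = ((u : 𝔭.adicCompletionIntegers k) : 𝔭.adicCompletion k)
            * (b : 𝔭.adicCompletion k) ^ p →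
        φ ⟨QuotientGroup.mk a, h⟩ = QuotientGroup.mk u) ∧
      ∀ x : VS k p ↑S, φ x = 1 ↔ (x : kˣ ⧸ pPowers kˣ p) ∈ VS k p (insert 𝔭 ↑S) :=
  statement3_general k p S 𝔭 h𝔭
end

section
/- Let k be a number field and p a prime number. The map sending the class of a ∈ k^× to the family (v(a) mod p)_v, indexed by the nonzero primes v of O_k, is a well-defined group homomorphism k^×/(k^×)^p → ⊕_v ℤ/pℤ (all but finitely many coordinates vanish); its kernel is V_∅(k) and its cokernel is isomorphic to Cl(k)/pCl(k). -/
open NumberField IsDedekindDomain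

open scoped DirectSum

/-!
Let `D = ⊕_v ℤ` be the divisor group. Unique factorization of fractional ideals identifies the
group `I_k` of invertible fractional ideals with `D`, and `v(a)` with the `v`-component of the
divisor of `(a)`. Hence the map of the theorem is `k^× → I_k → D/pD`, which kills `(k^×)^p`; its
kernel is `V_∅(k)` by definition. Writing `P ≤ I_k` for the principal ideals, the map
`I_k → D/pD` is onto with kernel `I_k^p`, so its cokernel is `I_k / P I_k^p`, which is also
`Cl(k)/pCl(k)` because `Cl(k) = I_k / P`.
-/

open scoped nonZeroDivisors

theorem QuotientGroup.range_lift {G M : Type*} [Group G] [Group M] (N : Subgroup G) [N.Normal]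
    (f : G →* M) (h : N ≤ f.ker) : (QuotientGroup.lift N f h).range = f.range := by
  conv_rhs => rw [← QuotientGroup.lift_comp_mk' N f h]
  rw [MonoidHom.range_comp,
    (MonoidHom.range_eq_top (f := QuotientGroup.mk' N)).mpr (QuotientGroup.mk'_surjective N),
    ← MonoidHom.range_eq_map]

section pPowers

variable {G H C : Type*} [CommGroup G] [CommGroup H] [CommGroup C]

theorem map_pPowers_le (f : G →* H) (p : ℕ) : (pPowers G p).map f ≤ pPowers H p := by
  rintro _ ⟨_, ⟨g, rfl⟩, rfl⟩
  exact ⟨f g, (map_pow f g p).symm⟩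

theorem map_pPowers_of_surjective {f : G →* H} (hf : Function.Surjective f) (p : ℕ) :
    (pPowers G p).map f = pPowers H p := by
  refine le_antisymm (map_pPowers_le f p) ?_
  rintro _ ⟨h, rfl⟩
  obtain ⟨g, rfl⟩ := hf h
  exact ⟨g ^ p, ⟨g, rfl⟩, map_pow f g p⟩

/-- Both sides are `G ⧸ (P ⊔ G^p)`. -/
noncomputable def quotientMapEquivQuotientPPowers (P : Subgroup G) (p : ℕ) {ρ : G →* H}
    (hρ : Function.Surjective ρ) (hρker : ρ.ker = pPowers G p) {π : G →* C}
    (hπ : Function.Surjective π) (hπker : π.ker = P) :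
    H ⧸ P.map ρ ≃* C ⧸ pPowers C p := by
  have hker : ((QuotientGroup.mk' (P.map ρ)).comp ρ).ker =
      ((QuotientGroup.mk' (pPowers C p)).comp π).ker := by
    rw [← MonoidHom.comap_ker, ← MonoidHom.comap_ker, QuotientGroup.ker_mk',
      QuotientGroup.ker_mk', Subgroup.comap_map_eq, hρker, ← map_pPowers_of_surjective hπ,
      Subgroup.comap_map_eq, hπker, sup_comm]
  exact (QuotientGroup.quotientKerEquivOfSurjective ((QuotientGroup.mk' (P.map ρ)).comp ρ)
      ((QuotientGroup.mk'_surjective _).comp hρ)).symm.trans <|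
    (QuotientGroup.quotientMulEquivOfEq hker).trans <|
    QuotientGroup.quotientKerEquivOfSurjective _ ((QuotientGroup.mk'_surjective _).comp hπ)

end pPowers

theorem ker_toMultiplicative_map_intCastAddHom (ι : Type*) (p : ℕ) :
    (AddMonoidHom.toMultiplicative (DirectSum.map fun _ : ι => Int.castAddHom (ZMod p))).ker =
      pPowers (Multiplicative (⨁ _i : ι, ℤ)) p := by
  ext x
  rw [MonoidHom.mem_ker]
  constructor
  · intro hx
    have hdvd (i : ι) : (p : ℤ) ∣ x.toAdd i := by
      rw [← ZMod.intCast_zmod_eq_zero_iff_dvd]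
      exact DFunLike.congr_fun (congrArg Multiplicative.toAdd hx) i
    refine ⟨.ofAdd (DFinsupp.mapRange (fun _ n => n / p) (fun _ => Int.zero_ediv _) x.toAdd), ?_⟩
    ext i
    simp [DirectSum.smul_apply, Int.mul_ediv_cancel' (hdvd i)]
  · rintro ⟨y, rfl⟩
    ext i
    simp [DirectSum.smul_apply]

namespace ClassGroup

variable {R : Type*} [CommRing R] [IsDomain R] (K : Type*) [Field K] [Algebra R K]
  [IsFractionRing R K]

theorem mk_surjective : Function.Surjective (ClassGroup.mk (R := R) K) :=
  fun x => ClassGroup.induction K (fun I => ⟨I, rfl⟩) x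

theorem ker_mk : (ClassGroup.mk (R := R) K).ker = (toPrincipalIdeal R K).range := by
  ext I
  rw [MonoidHom.mem_ker, ← (ClassGroup.equiv K).injective.eq_iff, map_one, ClassGroup.equiv_mk,
    FractionalIdeal.canonicalEquiv_self, QuotientGroup.mk'_apply, QuotientGroup.eq_one_iff]
  rfl

end ClassGroup

namespace FractionalIdeal

variable {R : Type*} [CommRing R] [IsDedekindDomain R] (K : Type*) [Field K] [Algebra R K]
  [IsFractionRing R K]

noncomputable def divisor (I : FractionalIdeal R⁰ K) : ⨁ _v : HeightOneSpectrum R, ℤ where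
  toFun v := count K v I
  support' := Trunc.mk ⟨(Filter.eventually_cofinite.mp (finite_factors I)).toFinset.val,
    fun v => by
      rw [Finset.mem_val, Set.Finite.mem_toFinset, Set.mem_ofPred_eq]
      exact em' _⟩

@[simp]
theorem divisor_apply (I : FractionalIdeal R⁰ K) (v : HeightOneSpectrum R) :
    divisor K I v = count K v I :=
  rfl

theorem divisor_injective :
    Function.Injective fun I : (FractionalIdeal R⁰ K)ˣ => divisor K (I : FractionalIdeal R⁰ K) := by
  intro I J h
  ext1
  rw [← finprod_heightOneSpectrum_factorization' (K := K) I.ne_zero,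
    ← finprod_heightOneSpectrum_factorization' (K := K) J.ne_zero]
  simp only [← divisor_apply, h]

theorem exists_divisor_eq (e : ⨁ _v : HeightOneSpectrum R, ℤ) :
    ∃ I : (FractionalIdeal R⁰ K)ˣ, divisor K (I : FractionalIdeal R⁰ K) = e := by
  classical
  have he : ∀ᶠ v in Filter.cofinite, e v = 0 :=
    Filter.eventually_cofinite.mpr <| e.support.finite_toSet.subset fun v hv => by simpa using hv
  have hne : (∏ᶠ v : HeightOneSpectrum R, (v.asIdeal : FractionalIdeal R⁰ K) ^ e v) ≠ 0 :=
    finprod_ne_zero fun v => zpow_ne_zero (e v) (coeIdeal_ne_zero.mpr v.ne_bot)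
  refine ⟨Units.mk0 _ hne, ?_⟩
  ext v
  exact count_finprod K v e he

variable (R)

noncomputable def divisorEquiv :
    (FractionalIdeal R⁰ K)ˣ ≃* Multiplicative (⨁ _v : HeightOneSpectrum R, ℤ) :=
  MulEquiv.ofBijective
    (MonoidHom.mk' (fun I : (FractionalIdeal R⁰ K)ˣ => .ofAdd (divisor K I)) fun I J => by
      ext v
      exact count_mul K v I.ne_zero J.ne_zero)
    ⟨fun _ _ h => divisor_injective K (Multiplicative.ofAdd.injective h),
      fun e => (exists_divisor_eq K e.toAdd).imp fun _ h => congrArg Multiplicative.ofAdd h⟩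

noncomputable def divisorModP (p : ℕ) :
    (FractionalIdeal R⁰ K)ˣ →* Multiplicative (⨁ _v : HeightOneSpectrum R, ZMod p) :=
  (AddMonoidHom.toMultiplicative (DirectSum.map fun _ => Int.castAddHom (ZMod p))).comp
    (divisorEquiv R K).toMonoidHom

variable {R} (p : ℕ)

theorem divisorModP_apply (I : (FractionalIdeal R⁰ K)ˣ) (v : HeightOneSpectrum R) :
    (divisorModP R K p I).toAdd v = (count K v (I : FractionalIdeal R⁰ K) : ZMod p) :=
  rfl

theorem divisorModP_surjective : Function.Surjective (divisorModP R K p) :=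
  (DirectSum.map_surjective fun _ => Int.castAddHom (ZMod p)).mpr
    (fun _ => ZMod.intCast_surjective) |>.comp (divisorEquiv R K).surjective

theorem ker_divisorModP : (divisorModP R K p).ker = pPowers _ p := by
  rw [divisorModP, ← MonoidHom.comap_ker, ker_toMultiplicative_map_intCastAddHom,
    Subgroup.comap_equiv_eq_map_symm', map_pPowers_of_surjective
      (f := (divisorEquiv R K).symm.toMonoidHom) (divisorEquiv R K).symm.surjective]

end FractionalIdeal

namespace IsDedekindDomain.HeightOneSpectrum

variable {R : Type*} [CommRing R] [IsDedekindDomain R] (K : Type*) [Field K] [Algebra R K]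
  [IsFractionRing R K] (v : HeightOneSpectrum R)

open FractionalIdeal WithZero

theorem intValuation_eq_exp_neg_count {r : R} (hr : r ≠ 0) :
    v.intValuation r = exp (-count K v (spanSingleton R⁰ (algebraMap R K r))) := by
  rw [v.intValuation_if_neg hr, ← coeIdeal_span_singleton,
    count_coe K v (by simpa [Ideal.span_singleton_eq_bot] using hr)]

variable {K} in
theorem valuation_eq_exp_neg_count {x : K} (hx : x ≠ 0) :
    v.valuation K x = exp (-count K v (spanSingleton R⁰ x)) := by
  obtain ⟨r, s, hs, rfl⟩ := IsFractionRing.div_surjective (A := R) x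
  have hr : r ≠ 0 := by
    rintro rfl
    simp at hx
  have hs0 : s ≠ 0 := nonZeroDivisors.ne_zero hs
  have hspan {t : R} (ht : t ≠ 0) : spanSingleton R⁰ (algebraMap R K t) ≠ 0 := by
    simpa [spanSingleton_eq_zero_iff] using (IsFractionRing.injective R K).ne ht
  rw [Valuation.map_div, v.valuation_of_algebraMap, v.valuation_of_algebraMap,
    v.intValuation_eq_exp_neg_count K hr, v.intValuation_eq_exp_neg_count K hs0, ← exp_sub,
    div_eq_mul_inv, ← spanSingleton_mul_spanSingleton, ← spanSingleton_inv,
    count_mul K v (hspan hr) (inv_ne_zero (hspan hs0)), count_inv]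
  ring_nf

end IsDedekindDomain.HeightOneSpectrum

section NumberField

variable (k : Type*) [Field k] [NumberField k] (p : ℕ)

theorem addVal_eq_count (v : HeightOneSpectrum (𝓞 k)) (a : kˣ) :
    addVal k v a = FractionalIdeal.count k v (toPrincipalIdeal (𝓞 k) k a) := by
  have h : addVal k v a = -WithZero.log (v.valuation k a) :=
    congrArg Neg.neg (WithZero.logEquiv_apply (Units.map _ a))
  rw [h, coe_toPrincipalIdeal, v.valuation_eq_exp_neg_count a.ne_zero, WithZero.log_exp, neg_neg]

noncomputable def valuationModP :
    kˣ →* Multiplicative (⨁ _v : HeightOneSpectrum (𝓞 k), ZMod p) :=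
  (FractionalIdeal.divisorModP (𝓞 k) k p).comp (toPrincipalIdeal (𝓞 k) k)

theorem valuationModP_apply (a : kˣ) (v : HeightOneSpectrum (𝓞 k)) :
    (valuationModP k p a).toAdd v = (addVal k v a : ZMod p) := by
  rw [valuationModP, MonoidHom.comp_apply, FractionalIdeal.divisorModP_apply, addVal_eq_count]

theorem pPowers_le_ker_valuationModP : pPowers kˣ p ≤ (valuationModP k p).ker := by
  rw [valuationModP, ← MonoidHom.comap_ker, FractionalIdeal.ker_divisorModP,
    ← Subgroup.map_le_iff_le_comap]
  exact map_pPowers_le _ p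

theorem ker_valuationModP : (valuationModP k p).ker = VSpre k p ∅ := by
  ext a
  have hker (v : HeightOneSpectrum (𝓞 k)) :
      a ∈ (valModP k p v).ker ↔ (addVal k v a : ZMod p) = 0 := by
    rw [MonoidHom.mem_ker, addVal, Int.cast_neg, neg_eq_zero, ← ofAdd_eq_one]
    rfl
  simp only [MonoidHom.mem_ker, VSpre, Subgroup.mem_inf, Subgroup.mem_iInf, Set.compl_empty,
    Set.mem_univ, Set.mem_empty_iff_false, IsEmpty.forall_iff, implies_true, true_and,
    forall_const, hker, ← valuationModP_apply]
  exact ⟨fun h v => by rw [h]; rfl, fun h => Multiplicative.toAdd.injective (DFinsupp.ext h)⟩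

end NumberField

theorem statement9_general (k : Type) [Field k] [NumberField k] (p : ℕ) :
    ∃ φ : (kˣ ⧸ pPowers kˣ p) →*
        Multiplicative (⨁ _v : HeightOneSpectrum (𝓞 k), ZMod p),
      (∀ (a : kˣ) (v : HeightOneSpectrum (𝓞 k)),
        Multiplicative.toAdd (φ (QuotientGroup.mk a)) v = ((addVal k v a : ℤ) : ZMod p)) ∧
      φ.ker = VS k p ∅ ∧
      Nonempty ((Multiplicative (⨁ _v : HeightOneSpectrum (𝓞 k), ZMod p) ⧸ φ.range)
        ≃* (ClassGroup (𝓞 k) ⧸ pPowers (ClassGroup (𝓞 k)) p)) := by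
  refine ⟨QuotientGroup.lift _ (valuationModP k p) (pPowers_le_ker_valuationModP k p),
    valuationModP_apply k p, ?_, ⟨?_⟩⟩
  · rw [QuotientGroup.ker_lift, ker_valuationModP, VS]
  · rw [QuotientGroup.range_lift, valuationModP, ← MonoidHom.map_range]
    exact quotientMapEquivQuotientPPowers _ p (FractionalIdeal.divisorModP_surjective k p)
      (FractionalIdeal.ker_divisorModP k p) (ClassGroup.mk_surjective k) (ClassGroup.ker_mk k)

/-- the map `k^×/(k^×)^p → ⊕_v ℤ/pℤ`, sending the class of `a` to
`(v(a) mod p)_v`, is a well-defined group homomorphism with kernel `V_∅(k)` and cokernel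
isomorphic to `Cl(k)/pCl(k)`. -/
theorem statement9 (k : Type) [Field k] [NumberField k] (p : ℕ) (hp : p.Prime) :
    ∃ φ : (kˣ ⧸ pPowers kˣ p) →*
        Multiplicative (⨁ _v : HeightOneSpectrum (𝓞 k), ZMod p),
      (∀ (a : kˣ) (v : HeightOneSpectrum (𝓞 k)),
        Multiplicative.toAdd (φ (QuotientGroup.mk a)) v = ((addVal k v a : ℤ) : ZMod p)) ∧
      φ.ker = VS k p ∅ ∧
      Nonempty ((Multiplicative (⨁ _v : HeightOneSpectrum (𝓞 k), ZMod p) ⧸ φ.range)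
        ≃* (ClassGroup (𝓞 k) ⧸ pPowers (ClassGroup (𝓞 k)) p)) :=
  statement9_general k p
end

section
/- Let k be a number field, p a prime number not dividing the class number of k, and 𝔭_1, …, 𝔭_m distinct nonzero primes of O_k. Then there exist elements s_1, …, s_m ∈ k^× such that for each i: 𝔭_i(s_i) ≡ 1 mod p, and q(s_i) ≡ 0 mod p for every nonzero prime q ≠ 𝔭_i of O_k. Moreover, for any such choice of s_1, …, s_m, the subgroup of k^×/(k^×)^p generated by the classes of s_1, …, s_m together with the image of O_k^× has cardinality p^m · #(O_k^×/(O_k^×)^p). -/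
/-!
Since `p ∤ h`, some multiple `e` of the class number `h` is `≡ 1 mod p`; then `𝔭^e = (x)` is
principal and `x` has valuation `e` at `𝔭` and `0` elsewhere.

For the count, the valuations mod `p` at the `𝔭_i` give a homomorphism
`k^×/(k^×)^p → (ℤ/p)^m` that sends the classes of the `s_i` to the standard basis and kills the
units. On the subgroup in question it is therefore onto, with kernel the image of `O_k^×`; and that
image is `O_k^×/(O_k^×)^p`, because a unit that is a `p`-th power in `k` is the `p`-th power of a
unit, `O_k` being integrally closed.
-/

open NumberField IsDedekindDomain

section GroupTheory

variable {G : Type*} [CommGroup G] {p : ℕ}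

lemma quotient_pPowers_pow_eq_one (g : G ⧸ pPowers G p) : g ^ p = 1 := by
  induction g using QuotientGroup.induction_on with
  | H a => rw [← QuotientGroup.mk_pow, QuotientGroup.eq_one_iff]; exact ⟨a, rfl⟩

lemma pPowers_le_ker_of_pow_eq_one {H : Type*} [CommGroup H] (f : G →* H)
    (hf : ∀ y : H, y ^ p = 1) : pPowers G p ≤ f.ker := by
  rintro _ ⟨a, rfl⟩
  simp [powMonoidHom, hf]

theorem card_closure_range_union_of_map_eq_mulSingle {ι : Type*} [Fintype ι] [DecidableEq ι]
    [NeZero p] (N : Subgroup G) (σ : ι → G) (hσ : ∀ i, σ i ^ p = 1)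
    (Φ : G →* (ι → Multiplicative (ZMod p))) (hN : N ≤ Φ.ker)
    (hΦ : ∀ i, Φ (σ i) = Pi.mulSingle i (Multiplicative.ofAdd 1)) :
    Nat.card (Subgroup.closure (Set.range σ ∪ N)) = p ^ Fintype.card ι * Nat.card N := by
  set H := Subgroup.closure (Set.range σ ∪ N) with hH
  have hΦprod (a : ι → ℤ) :
      Φ (∏ i, σ i ^ a i) = fun i ↦ Multiplicative.ofAdd (a i : ZMod p) := by
    simp only [map_prod, map_zpow, hΦ, ← Pi.mulSingle_zpow, ← ofAdd_zsmul, zsmul_one]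
    exact Finset.univ_prod_mulSingle fun i ↦ Multiplicative.ofAdd (a i : ZMod p)
  have hσH (a : ι → ℤ) : ∏ i, σ i ^ a i ∈ H :=
    Subgroup.prod_mem _ fun i _ ↦ zpow_mem (Subgroup.subset_closure (.inl ⟨i, rfl⟩)) _
  have hrange : (Φ.domRestrict H).range = ⊤ := by
    refine eq_top_iff.mpr fun x _ ↦
      ⟨⟨_, hσH fun i ↦ ((Multiplicative.toAdd (x i)).val : ℤ)⟩, ?_⟩
    ext i
    simp [hΦprod]
  have hker : (Φ.domRestrict H).ker = N.subgroupOf H := by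
    rw [MonoidHom.ker_domRestrict]
    refine le_antisymm (fun ⟨x, hxH⟩ hx ↦ ?_) fun _ hx ↦ hN hx
    have hx_sup : x ∈ Subgroup.closure (Set.range σ) ⊔ N := by
      rwa [hH, Subgroup.closure_union, Subgroup.closure_eq] at hxH
    obtain ⟨y, hy, n, hn, rfl⟩ := Subgroup.mem_sup.mp hx_sup
    obtain ⟨a, rfl⟩ := Subgroup.exists_of_mem_closure_range σ y hy
    have hΦa : Φ (∏ i, σ i ^ a i) = 1 := by
      simpa [Subgroup.mem_subgroupOf, (MonoidHom.mem_ker).mp (hN hn)] using hx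
    have hσa (i : ι) : σ i ^ a i = 1 := by
      obtain ⟨b, hb⟩ := (ZMod.intCast_zmod_eq_zero_iff_dvd (a i) p).mp
        (by simpa [hΦprod] using congrFun hΦa i)
      rw [hb, zpow_mul, zpow_natCast, hσ, one_zpow]
    simpa [Subgroup.mem_subgroupOf, hσa] using hn
  rw [Subgroup.card_eq_card_quotient_mul_card_subgroup (Φ.domRestrict H).ker,
    Nat.card_congr (QuotientGroup.quotientKerEquivRange _).toEquiv, hrange, hker,
    Nat.card_congr (Subgroup.subgroupOfEquivOfLe _).toEquiv, Subgroup.card_top, Nat.card_fun,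
    Nat.card_eq_fintype_card (α := ι)]
  · exact congrArg (· ^ _ * _) (Nat.card_zmod p)
  · exact fun _ hx ↦ Subgroup.subset_closure (.inr hx)

end GroupTheory

section IntegrallyClosed

variable {R K : Type*} [CommRing R] [IsIntegrallyClosed R] [Field K] [Algebra R K]
  [IsFractionRing R K]

theorem ker_unitsMap_comp_mk_pPowers {p : ℕ} (hp : 0 < p) :
    ((QuotientGroup.mk' (pPowers Kˣ p)).comp (Units.map (algebraMap R K).toMonoidHom)).ker =
      pPowers Rˣ p := by
  refine le_antisymm (fun w hw ↦ ?_) (fun _ ⟨v, hv⟩ ↦ ?_)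
  · obtain ⟨a, ha⟩ := (QuotientGroup.eq_one_iff _).mp hw
    have ha' : (a : K) ^ p = algebraMap R K w := congrArg Units.val ha
    obtain ⟨y, hy⟩ := IsIntegrallyClosed.exists_algebraMap_eq_of_isIntegral_pow hp
      (ha' ▸ isIntegral_algebraMap)
    have hyw : y ^ p = w := IsFractionRing.injective R K (by rw [map_pow, hy, ha'])
    have hyu : IsUnit y :=
      isUnit_of_dvd_unit (Dvd.intro_left _ ((pow_sub_one_mul hp.ne' y).trans hyw)) w.isUnit
    exact ⟨hyu.unit, Units.ext hyw⟩
  · rw [MonoidHom.mem_ker, MonoidHom.comp_apply, QuotientGroup.mk'_apply,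
      QuotientGroup.eq_one_iff, ← hv]
    exact ⟨Units.map (algebraMap R K).toMonoidHom v, (map_pow _ v p).symm⟩

end IntegrallyClosed

section DedekindDomain

variable {R : Type*} [CommRing R] [IsDedekindDomain R]

open scoped nonZeroDivisors in
theorem isPrincipal_pow_natCard_classGroup_mul {I : Ideal R} (hI : I ≠ ⊥) (n : ℕ) :
    (I ^ (Nat.card (ClassGroup R) * n)).IsPrincipal := by
  have hI0 : I ∈ (Ideal R)⁰ := mem_nonZeroDivisors_of_ne_zero hI
  rw [← ClassGroup.mk0_eq_one_iff (pow_mem hI0 _), ← SubmonoidClass.mk_pow _ hI0, map_pow,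
    pow_mul, pow_card_eq_one', one_pow]

namespace IsDedekindDomain.HeightOneSpectrum

theorem intValuation_of_pow_eq_span {v : HeightOneSpectrum R} {e : ℕ} {x : R}
    (hx : v.asIdeal ^ e = Ideal.span {x}) (hx0 : x ≠ 0) :
    v.intValuation x = WithZero.exp (-(e : ℤ)) := by
  rw [v.intValuation_if_neg hx0, ← hx, Associates.mk_pow,
    Associates.count_pow (Associates.mk_ne_zero.mpr v.ne_bot) v.associates_irreducible,
    Associates.count_self v.associates_irreducible, mul_one]

theorem intValuation_eq_one_of_pow_eq_span {v q : HeightOneSpectrum R} (hqv : q ≠ v) {e : ℕ}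
    {x : R} (hx : v.asIdeal ^ e = Ideal.span {x}) : q.intValuation x = 1 := by
  refine intValuation_eq_one_iff.mpr fun hxq ↦ hqv (HeightOneSpectrum.ext ?_)
  have hvq : v.asIdeal ≤ q.asIdeal :=
    Ideal.IsPrime.le_of_pow_le (hx ▸ (Ideal.span_singleton_le_iff_mem _).mpr hxq)
  exact (v.isMaximal.eq_of_le q.isPrime.ne_top hvq).symm

end IsDedekindDomain.HeightOneSpectrum

end DedekindDomain

section NumberField

variable {k : Type*} [Field k] [NumberField k]

lemma coe_mulValHom (v : HeightOneSpectrum (𝓞 k)) (a : kˣ) :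
    (mulValHom k v a : WithZero (Multiplicative ℤ)) = v.valuation k (a : k) := by
  simp [mulValHom, WithZero.unitsWithZeroEquiv, WithZero.coe_unzero]

lemma valuation_eq_exp_neg_addVal (v : HeightOneSpectrum (𝓞 k)) (a : kˣ) :
    v.valuation k (a : k) = WithZero.exp (-addVal k v a) := by
  rw [← coe_mulValHom, addVal, neg_neg]
  rfl

lemma addVal_eq_of_intValuation_eq {v : HeightOneSpectrum (𝓞 k)} {a : kˣ} {x : 𝓞 k}
    (hax : (a : k) = algebraMap (𝓞 k) k x) {n : ℤ}
    (hx : v.intValuation x = WithZero.exp (-n)) : addVal k v a = n := by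
  rw [← neg_inj, ← WithZero.exp_inj, ← valuation_eq_exp_neg_addVal, hax,
    HeightOneSpectrum.valuation_of_algebraMap, hx]

lemma valModP_apply (p : ℕ) (v : HeightOneSpectrum (𝓞 k)) (a : kˣ) :
    valModP k p v a = Multiplicative.ofAdd (-(addVal k v a : ZMod p)) := by
  simp only [valModP, addVal, MonoidHom.comp_apply, Int.cast_neg, neg_neg]
  rfl

lemma mulValHom_unitsMap (v : HeightOneSpectrum (𝓞 k)) (u : (𝓞 k)ˣ) :
    mulValHom k v (Units.map (algebraMap (𝓞 k) k).toMonoidHom u) = 1 := by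
  refine WithZero.coe_injective ((coe_mulValHom v _).trans ?_)
  refine (HeightOneSpectrum.valuation_of_algebraMap v (u : 𝓞 k)).trans ?_
  exact HeightOneSpectrum.intValuation_eq_one_iff.mpr
    fun hu ↦ v.isPrime.ne_top (Ideal.eq_top_of_isUnit_mem _ hu u.isUnit)

theorem exists_addVal_modEq_one_and_dvd {p : ℕ} (hp : 1 < p)
    (hcop : (Nat.card (ClassGroup (𝓞 k))).Coprime p) (𝔭 : HeightOneSpectrum (𝓞 k)) :
    ∃ s : kˣ, addVal k 𝔭 s ≡ 1 [ZMOD p] ∧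
      ∀ q : HeightOneSpectrum (𝓞 k), q ≠ 𝔭 → (p : ℤ) ∣ addVal k q s := by
  obtain ⟨n, -, hn⟩ := Nat.exists_mul_mod_eq_one_of_coprime hcop hp
  obtain ⟨x, hx⟩ := (isPrincipal_pow_natCard_classGroup_mul 𝔭.ne_bot n).principal
  have hx0 : x ≠ 0 := by
    rintro rfl
    exact pow_ne_zero _ 𝔭.ne_bot (hx.trans (Ideal.span_singleton_eq_bot.mpr rfl))
  have hx0k : algebraMap (𝓞 k) k x ≠ 0 :=
    (map_ne_zero_iff _ (IsFractionRing.injective (𝓞 k) k)).mpr hx0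
  refine ⟨Units.mk0 _ hx0k, ?_, fun q hq ↦ ?_⟩
  · rw [addVal_eq_of_intValuation_eq rfl (𝔭.intValuation_of_pow_eq_span hx hx0)]
    exact Int.natCast_modEq_iff.mpr (hn.trans (Nat.mod_eq_of_lt hp).symm)
  · have hxq := HeightOneSpectrum.intValuation_eq_one_of_pow_eq_span hq hx
    rw [addVal_eq_of_intValuation_eq (n := 0) rfl (by rwa [neg_zero, WithZero.exp_zero])]
    exact dvd_zero _

end NumberField

section Kummer

variable (k : Type*) [Field k] [NumberField k] (p : ℕ) {ι : Type*}

/-- `valModP` records `-v(a)`, hence the inverse. -/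
noncomputable def valsModP (𝔭 : ι → HeightOneSpectrum (𝓞 k)) :
    kˣ ⧸ pPowers kˣ p →* (ι → Multiplicative (ZMod p)) :=
  QuotientGroup.lift _ (MonoidHom.pi fun i ↦ (valModP k p (𝔭 i))⁻¹) <|
    pPowers_le_ker_of_pow_eq_one _ fun _ ↦ funext fun _ ↦ Multiplicative.toAdd.injective (by simp)

variable {k p}

lemma valsModP_mk (𝔭 : ι → HeightOneSpectrum (𝓞 k)) (a : kˣ) (i : ι) :
    valsModP k p 𝔭 (a : kˣ ⧸ pPowers kˣ p) i =
      Multiplicative.ofAdd (addVal k (𝔭 i) a : ZMod p) := by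
  simp [valsModP, valModP_apply]

lemma valsModP_unitsMap (𝔭 : ι → HeightOneSpectrum (𝓞 k)) (u : (𝓞 k)ˣ) :
    valsModP k p 𝔭 (Units.map (algebraMap (𝓞 k) k).toMonoidHom u : kˣ ⧸ pPowers kˣ p) =
      1 := by
  ext i
  rw [valsModP_mk, addVal, mulValHom_unitsMap]
  simp

theorem card_closure_classes_union_units [NeZero p] [Fintype ι] [DecidableEq ι]
    (𝔭 : ι → HeightOneSpectrum (𝓞 k)) (s : ι → kˣ)
    (hs : ∀ i j, (addVal k (𝔭 i) (s j) : ZMod p) = if i = j then 1 else 0) :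
    Nat.card (Subgroup.closure
        (Set.range (fun i ↦ (s i : kˣ ⧸ pPowers kˣ p)) ∪
         Set.range (fun u : (𝓞 k)ˣ ↦
           (Units.map (algebraMap (𝓞 k) k).toMonoidHom u : kˣ ⧸ pPowers kˣ p))))
      = p ^ Fintype.card ι * Nat.card ((𝓞 k)ˣ ⧸ pPowers (𝓞 k)ˣ p) := by
  set unitClasses := ((QuotientGroup.mk' (pPowers kˣ p)).comp
    (Units.map (algebraMap (𝓞 k) k).toMonoidHom))
  have hcard : Nat.card unitClasses.range = Nat.card ((𝓞 k)ˣ ⧸ pPowers (𝓞 k)ˣ p) :=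
    Nat.card_congr ((QuotientGroup.quotientMulEquivOfEq
      (ker_unitsMap_comp_mk_pPowers (Nat.pos_of_neZero p)).symm).trans
        (QuotientGroup.quotientKerEquivRange _)).toEquiv.symm
  have hrange : Set.range (fun u : (𝓞 k)ˣ ↦
      (Units.map (algebraMap (𝓞 k) k).toMonoidHom u : kˣ ⧸ pPowers kˣ p)) =
        unitClasses.range :=
    (MonoidHom.coe_range unitClasses).symm
  rw [← hcard, hrange]
  refine card_closure_range_union_of_map_eq_mulSingle _ _
    (fun i ↦ quotient_pPowers_pow_eq_one _) (valsModP k p 𝔭) ?_ fun j ↦ funext fun i ↦ ?_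
  · rintro _ ⟨u, rfl⟩
    exact valsModP_unitsMap 𝔭 u
  · rw [valsModP_mk, hs, Pi.mulSingle_apply]
    split_ifs <;> rfl

end Kummer

/-- if `p` does not divide the class number and `𝔭_1, …, 𝔭_m` are distinct
nonzero primes, then there exist `s_1, …, s_m ∈ k^×` with `𝔭_i(s_i) ≡ 1 mod p` and
`q(s_i) ≡ 0 mod p` for every nonzero prime `q ≠ 𝔭_i`; and for any such choice the subgroup of
`k^×/(k^×)^p` generated by the classes of the `s_i` together with the image of `O_k^×` has
cardinality `p^m · #(O_k^×/(O_k^×)^p)`. -/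
theorem statement11 (k : Type) [Field k] [NumberField k] (p : ℕ) (hp : p.Prime)
    (hcl : ¬ p ∣ Nat.card (ClassGroup (𝓞 k)))
    (m : ℕ) (𝔭 : Fin m → HeightOneSpectrum (𝓞 k)) (hinj : Function.Injective 𝔭) :
    (∃ s : Fin m → kˣ, ∀ i,
      addVal k (𝔭 i) (s i) ≡ 1 [ZMOD (p : ℤ)] ∧
      ∀ q : HeightOneSpectrum (𝓞 k), q ≠ 𝔭 i → (p : ℤ) ∣ addVal k q (s i)) ∧
    ∀ s : Fin m → kˣ,
      (∀ i, addVal k (𝔭 i) (s i) ≡ 1 [ZMOD (p : ℤ)] ∧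
        ∀ q : HeightOneSpectrum (𝓞 k), q ≠ 𝔭 i → (p : ℤ) ∣ addVal k q (s i)) →
      Nat.card (Subgroup.closure
          (Set.range (fun i : Fin m => (QuotientGroup.mk (s i) : kˣ ⧸ pPowers kˣ p)) ∪
           Set.range (fun u : (𝓞 k)ˣ =>
             (QuotientGroup.mk (Units.map (algebraMap (𝓞 k) k).toMonoidHom u)
               : kˣ ⧸ pPowers kˣ p))))
        = p ^ m * Nat.card ((𝓞 k)ˣ ⧸ pPowers (𝓞 k)ˣ p) := by
  have : NeZero p := ⟨hp.ne_zero⟩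
  refine ⟨?_, fun s hs ↦ ?_⟩
  · have hcop := ((Nat.Prime.coprime_iff_not_dvd hp).mpr hcl).symm
    choose s hs using fun i ↦ exists_addVal_modEq_one_and_dvd hp.one_lt hcop (𝔭 i)
    exact ⟨s, fun i ↦ hs i⟩
  · have hvals (i j : Fin m) :
        (addVal k (𝔭 i) (s j) : ZMod p) = if i = j then 1 else 0 := by
      split_ifs with hij
      · subst hij
        exact_mod_cast (ZMod.intCast_eq_intCast_iff _ _ p).mpr (hs i).1
      · exact (ZMod.intCast_zmod_eq_zero_iff_dvd _ p).mpr ((hs j).2 _ (hinj.ne hij))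
    exact (card_closure_classes_union_units 𝔭 s hvals).trans (by rw [Fintype.card_fin])
end
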